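/- (Decomposition of Zₙ^{(3)}.) For the two-armed σ-over-penalized Narendra–Shapiro algorithm with γ₁ ∈ (0,1), ε ∈ (0,1/3] and n₀ = ⌊1/(4ε²γ₁²π²)⌋ + 1: for every n ≥ n₀, E[Zₙ₊₁^{(3)} − Zₙ^{(3)} | Fₙ] ≤ γₙ₊₁·(1−Xₙ)·Pₙ(Xₙ) + (1−σp₂)·[3γₙ₊₁ρₙ₊₁² + γₙ₊₁²ρₙ₊₁³], where Pₙ is the cubic polynomial Pₙ(x) = ((1−x)²/γₙ₊₁)(εₙ − 3πx) − 3ρ̃₁(1−x)κ_σ(x) + 3(x(1−x)²p₁ + x²(1−x)p₂) + γₙ₊₁(−x(1−x)²p₁ + x³p₂). -/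

import Mathlib

open MeasureTheory ProbabilityTheory Real Filter

noncomputable section

/-- Step sequence `γₙ = γ₁ / √n` (also used for `ρₙ = ρ₁ / √n`). -/
def NSstep (c : ℝ) (n : ℕ) : ℝ := c / Real.sqrt n

/-- Real value (`0` or `1`) attached to a Boolean Bernoulli outcome. -/
def bval (b : Bool) : ℝ := if b then 1 else 0

/-- Probability that a Bernoulli random variable of parameter `p` takes the value `b`. -/
def bern (p : ℝ) (b : Bool) : ℝ := if b then p else 1 - p

/-- The two-armed `σ`-over-penalized Narendra–Shapiro algorithm with steps
`γₙ = γ₁/√n` and `ρₙ = ρ₁/√n`.  Arm `0` (reward probability `p₁`) is the best arm,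
arm `1` has reward probability `p₂`.  `Xₙ` is the probability of drawing arm `0` at
time `n`, `Iₙ₊₁` is the arm selected at step `n+1`, `Aₙʲ` the reward of arm `j` at
time `n` and `Bₙ` the extra Bernoulli(σ) variables used for the over-penalization. -/
structure NS2 (Ω : Type) [mΩ : MeasurableSpace Ω] where
  μ : Measure Ω
  prob : IsProbabilityMeasure μ
  p₁ : ℝ
  p₂ : ℝ
  σ : ℝ
  γ₁ : ℝ
  ρ₁ : ℝ
  hp₂ : 0 ≤ p₂
  hp : p₂ < p₁
  hp₁ : p₁ ≤ 1
  hσ : σ ∈ Set.Icc (0:ℝ) 1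
  hγ₁ : γ₁ ∈ Set.Ioo (0:ℝ) 1
  hρ₁ : ρ₁ ∈ Set.Ioo (0:ℝ) 1
  A : ℕ → Fin 2 → Ω → ℝ
  B : ℕ → Ω → ℝ
  I : ℕ → Ω → Fin 2
  X : ℕ → Ω → ℝ
  F : Filtration ℕ mΩ
  hAmeas : ∀ n j, Measurable (A n j)
  hBmeas : ∀ n, Measurable (B n)
  hAval : ∀ n j ω, A n j ω = 0 ∨ A n j ω = 1
  hBval : ∀ n ω, B n ω = 0 ∨ B n ω = 1
  hAlaw : ∀ n (j : Fin 2), μ {ω | A n j ω = 1} = ENNReal.ofReal (if j = 0 then p₁ else p₂)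
  hBlaw : ∀ n, μ {ω | B n ω = 1} = ENNReal.ofReal σ
  /-- the reward sequences and the penalization sequence are (mutually) independent -/
  hIndep : iIndepFun (m := fun _ : ℕ × Fin 3 => (inferInstance : MeasurableSpace ℝ))
      (fun k ω => if k.2 = 0 then A k.1 0 ω else if k.2 = 1 then A k.1 1 ω else B k.1 ω) μ
  hX0 : ∀ ω, X 0 ω ∈ Set.Icc (0:ℝ) 1
  hXmeas : ∀ n, Measurable[F n] (X n)
  hImeas : ∀ n, Measurable[F (n+1)] (I (n+1))
  hObs : ∀ n, Measurable[F (n+1)] (fun ω => A (n+1) (I (n+1) ω) ω)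
  /-- conditionally on the past, the arm `Iₙ₊₁` is drawn with distribution `(Xₙ, 1-Xₙ)`,
  independently of the (Bernoulli) rewards and of `Bₙ₊₁`. -/
  condLaw : ∀ n (j : Fin 2) (a b : Bool),
    (μ[Set.indicator {ω | I (n+1) ω = j ∧ A (n+1) j ω = bval a ∧ B (n+1) ω = bval b}
        (fun _ => (1:ℝ)) | F n])
      =ᵐ[μ] fun ω => (if j = 0 then X n ω else 1 - X n ω) * bern (if j = 0 then p₁ else p₂) a
          * bern σ b
  /-- the recursive update of the algorithm -/
  hrec : ∀ n ω, X (n+1) ω = X n ω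
      + NSstep γ₁ (n+1) * ((if I (n+1) ω = 0 then 1 else 0) - X n ω) * A (n+1) (I (n+1) ω) ω
      - NSstep γ₁ (n+1) * NSstep ρ₁ (n+1) *
        (X n ω * (if I (n+1) ω = 0 then 1 else 0)
          - (1 - X n ω) * (if I (n+1) ω = 1 then 1 else 0)) *
        (1 - A (n+1) (I (n+1) ω) ω * B (n+1) ω)

/-- Pseudo-regret after `n` plays: `R̄ₙ = (p₁-p₂) E[∑_{k=1}^n (1-X_k)]`. -/
def NS2.pseudoRegret {Ω : Type} [MeasurableSpace Ω] (S : NS2 Ω) (n : ℕ) : ℝ :=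
  (S.p₁ - S.p₂) * ∫ ω, (∑ k ∈ Finset.Icc 1 n, (1 - S.X k ω)) ∂S.μ

/-- The sequence `Zₙ⁽³⁾ = (1-Xₙ)³/γₙ`. -/
def NS2.Z3 {Ω : Type} [MeasurableSpace Ω] (S : NS2 Ω) (n : ℕ) (ω : Ω) : ℝ :=
  (1 - S.X n ω) ^ 3 / NSstep S.γ₁ n

/-- `εₙ = 1/γₙ₊₁ - 1/γₙ`. -/
def epsSeq (γ₁ : ℝ) (n : ℕ) : ℝ := 1 / NSstep γ₁ (n+1) - 1 / NSstep γ₁ n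

/-- The penalty drift `κ_σ(x) = (1-σp₂)(1-x)² - (1-σp₁)x²`. -/
def kappa (p₁ p₂ σ : ℝ) (x : ℝ) : ℝ := (1 - σ * p₂) * (1 - x)^2 - (1 - σ * p₁) * x^2

/-- The cubic polynomial `Pₙ` appearing in the decomposition of `Zₙ⁽³⁾`
(`π = p₁ - p₂`, `ρ̃₁ = ρ₁/γ₁`). -/
def Pcub (p₁ p₂ σ γ₁ ρ₁ : ℝ) (n : ℕ) (x : ℝ) : ℝ :=
  ((1 - x)^2 / NSstep γ₁ (n+1)) * (epsSeq γ₁ n - 3 * (p₁ - p₂) * x)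
    - 3 * (ρ₁ / γ₁) * (1 - x) * kappa p₁ p₂ σ x
    + 3 * (x * (1 - x)^2 * p₁ + x^2 * (1 - x) * p₂)
    + NSstep γ₁ (n+1) * (-(x * (1 - x)^2 * p₁) + x^3 * p₂)

/-!
Given `Fₙ`, the next state `Xₙ₊₁` is one of eight explicit values `nsUpdate γₙ₊₁ ρₙ₊₁ j a b Xₙ`,
indexed by the arm `j` played, its reward `a` and the penalty coin `b`, taken with the conditional
probabilities `outcomeProb p₁ p₂ σ (j, a, b) Xₙ` given by `NS2.condLaw`. The conditional drift of
`Zₙ⁽³⁾` is therefore a polynomial in `Xₙ`, `γₙ₊₁`, `ρₙ₊₁` divided by `γₙ₊₁`, minus `(1-Xₙ)³/γₙ`.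
Expanding `(1 - Xₙ₊₁)³` around `1 - Xₙ`, all terms but three recombine into `γₙ₊₁(1-Xₙ)Pₙ(Xₙ)`,
and those three terms are bounded by elementary inequalities on `[0,1]`.
-/

lemma NSstep_nonneg {c : ℝ} (hc : 0 ≤ c) (n : ℕ) : 0 ≤ NSstep c n :=
  div_nonneg hc (Real.sqrt_nonneg _)

lemma NSstep_succ_le {c : ℝ} (hc : 0 ≤ c) (n : ℕ) : NSstep c (n+1) ≤ c :=
  div_le_self hc (Real.one_le_sqrt.2 (by simp))

lemma NSstep_succ_mem_Icc {c : ℝ} (hc : c ∈ Set.Ioo (0:ℝ) 1) (n : ℕ) :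
    NSstep c (n+1) ∈ Set.Icc (0:ℝ) 1 :=
  ⟨NSstep_nonneg hc.1.le _, (NSstep_succ_le hc.1.le n).trans hc.2.le⟩

lemma NSstep_succ_div (a c : ℝ) (n : ℕ) : NSstep a (n+1) / NSstep c (n+1) = a / c :=
  div_div_div_cancel_right₀ (Real.sqrt_pos.2 (by positivity)).ne' a c

lemma exists_bval_eq {t : ℝ} (ht : t = 0 ∨ t = 1) : ∃ b, t = bval b := by
  rcases ht with rfl | rfl
  exacts [⟨false, rfl⟩, ⟨true, rfl⟩]

lemma bval_injective : Function.Injective bval := by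
  intro a b h
  cases a <;> cases b <;> simp_all [bval]

def nsUpdate (g r : ℝ) (j : Fin 2) (a b x : ℝ) : ℝ :=
  x + g * ((if j = 0 then 1 else 0) - x) * a
    - g * r * (x * (if j = 0 then 1 else 0) - (1 - x) * (if j = 1 then 1 else 0)) * (1 - a * b)

lemma nsUpdate_mem_Icc {g r x : ℝ} (hg : g ∈ Set.Icc (0:ℝ) 1) (hr : r ∈ Set.Icc (0:ℝ) 1)
    (hx : x ∈ Set.Icc (0:ℝ) 1) (j : Fin 2) (a b : Bool) :
    nsUpdate g r j (bval a) (bval b) x ∈ Set.Icc (0:ℝ) 1 := by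
  obtain ⟨hg0, hg1⟩ := hg
  obtain ⟨hr0, hr1⟩ := hr
  obtain ⟨hx0, hx1⟩ := hx
  have hgr : g * r ≤ 1 := mul_le_one₀ hg1 hr0 hr1
  fin_cases j <;> cases a <;> cases b <;>
    simp only [nsUpdate, bval, Set.mem_Icc, Fin.isValue, Fin.zero_eta, Fin.mk_one, ↓reduceIte,
      one_ne_zero, zero_ne_one, Bool.false_eq_true] <;>
    constructor <;> nlinarith [mul_nonneg hg0 hr0]

def outcomeProb (p₁ p₂ σ : ℝ) (u : Fin 2 × Bool × Bool) (x : ℝ) : ℝ :=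
  (if u.1 = 0 then x else 1 - x) * bern (if u.1 = 0 then p₁ else p₂) u.2.1 * bern σ u.2.2

lemma sum_outcomeProb (p₁ p₂ σ x : ℝ) : ∑ u, outcomeProb p₁ p₂ σ u x = 1 := by
  simp only [outcomeProb, bern, Fintype.sum_prod_type, Fin.sum_univ_two, Fintype.sum_bool,
    Fin.isValue, ↓reduceIte, one_ne_zero, Bool.false_eq_true]
  ring

/-- The exact conditional mean of `(1 - Xₙ₊₁)³` given `Xₙ = x`
(`sum_cube_one_sub_nsUpdate_eq`) with its three remainder terms, of orders `g²r`, `g²r²` and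
`g³r³`, replaced by the upper bounds `0`, `3g²r²(1-σp₂)` and `g³r³(1-σp₂)`. -/
def cubeDriftBound (p₁ p₂ σ g r x : ℝ) : ℝ :=
  (1 - x)^3 - 3 * g * (p₁ - p₂) * x * (1 - x)^3 - 3 * g * r * (1 - x)^2 * kappa p₁ p₂ σ x
    + 3 * g^2 * (x * (1 - x)^3 * p₁ + x^2 * (1 - x)^2 * p₂)
    + g^3 * (-(x * (1 - x)^3 * p₁) + x^3 * (1 - x) * p₂)
    + (1 - σ * p₂) * (3 * g^2 * r^2 + g^3 * r^3)

lemma sum_cube_one_sub_nsUpdate_eq (p₁ p₂ σ g r x : ℝ) :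
    ∑ u, (1 - nsUpdate g r u.1 (bval u.2.1) (bval u.2.2) x)^3 * outcomeProb p₁ p₂ σ u x
      = cubeDriftBound p₁ p₂ σ g r x - (1 - σ * p₂) * (3 * g^2 * r^2 + g^3 * r^3)
        - 3 * g^2 * r * ((1 - σ) * x * (1 - x)^2)
          * (2 * (x * p₁ + (1 - x) * p₂) - g * (p₁ - p₂) * x)
        + 3 * g^2 * r^2 * ((1 - x) * (x^3 * (1 - σ * p₁) + (1 - x)^3 * (1 - σ * p₂))
          - g * (1 - σ) * x * (1 - x) * (x^2 * p₁ - (1 - x)^2 * p₂))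
        + g^3 * r^3 * (x^4 * (1 - σ * p₁) - (1 - x)^4 * (1 - σ * p₂)) := by
  simp only [nsUpdate, outcomeProb, bern, bval, cubeDriftBound, kappa, Fintype.sum_prod_type,
    Fin.sum_univ_two, Fintype.sum_bool, Fin.isValue, ↓reduceIte, one_ne_zero, zero_ne_one,
    Bool.false_eq_true]
  ring

lemma sum_cube_one_sub_nsUpdate_le {p₁ p₂ σ g r x : ℝ} (hp₂ : 0 ≤ p₂) (hp : p₂ ≤ p₁)
    (hp₁ : p₁ ≤ 1) (hσ : σ ∈ Set.Icc (0:ℝ) 1) (hg : g ∈ Set.Icc (0:ℝ) 1) (hr : 0 ≤ r)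
    (hx : x ∈ Set.Icc (0:ℝ) 1) :
    ∑ u, (1 - nsUpdate g r u.1 (bval u.2.1) (bval u.2.2) x)^3 * outcomeProb p₁ p₂ σ u x
      ≤ cubeDriftBound p₁ p₂ σ g r x := by
  obtain ⟨hσ0, hσ1⟩ := hσ
  obtain ⟨hg0, hg1⟩ := hg
  obtain ⟨hx0, hx1⟩ := hx
  rw [sum_cube_one_sub_nsUpdate_eq]
  set y := 1 - x with hy
  have hy0 : 0 ≤ y := by linarith
  have hσp₁ : 0 ≤ 1 - σ * p₁ := sub_nonneg.2 (mul_le_one₀ hσ1 (hp₂.trans hp) hp₁)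
  have hσp : 1 - σ * p₁ ≤ 1 - σ * p₂ := by linarith [mul_le_mul_of_nonneg_left hp hσ0]
  have h₁ : 0 ≤ 3 * g^2 * r * ((1 - σ) * x * y^2) * (2 * (x * p₁ + y * p₂) - g * (p₁ - p₂) * x) := by
    have : g * (p₁ - p₂) * x ≤ 2 * (x * p₁ + y * p₂) := by
      linarith [mul_le_of_le_one_left (mul_nonneg (sub_nonneg.2 hp) hx0) hg1,
        mul_nonneg hx0 (hp₂.trans hp), mul_nonneg hy0 hp₂, mul_nonneg hx0 hp₂]
    have : 0 ≤ (1 - σ) * x * y^2 := by have := sub_nonneg.2 hσ1; positivity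
    have : 0 ≤ 2 * (x * p₁ + y * p₂) - g * (p₁ - p₂) * x := by linarith
    positivity
  have h₂ : y * (x^3 * (1 - σ * p₁) + y^3 * (1 - σ * p₂))
      - g * (1 - σ) * x * y * (x^2 * p₁ - y^2 * p₂) ≤ 1 - σ * p₂ := by
    have hcube : y * x^3 + y^4 + x * y^3 ≤ 1 := by
      have : 1 - (y * x^3 + y^4 + x * y^3) = x^4 + 3 * x^2 * y + 3 * x * y^2 := by rw [hy]; ring
      have : 0 ≤ x^4 + 3 * x^2 * y + 3 * x * y^2 := by positivity
      linarith
    have hcoef : g * (1 - σ) * p₂ ≤ 1 - σ * p₂ := by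
      linarith [mul_le_of_le_one_left (mul_nonneg (sub_nonneg.2 hσ1) hp₂) hg1, hp.trans hp₁]
    have hyx : 0 ≤ y * x^3 := by positivity
    linarith [mul_le_mul_of_nonneg_left hσp hyx,
      mul_le_mul_of_nonneg_right hcoef (by positivity : 0 ≤ x * y^3),
      mul_nonneg (mul_nonneg (mul_nonneg hg0 (sub_nonneg.2 hσ1)) hyx) (hp₂.trans hp),
      mul_le_mul_of_nonneg_left hcube (hσp₁.trans hσp)]
  have h₃ : x^4 * (1 - σ * p₁) - y^4 * (1 - σ * p₂) ≤ 1 - σ * p₂ := by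
    linarith [mul_le_of_le_one_left hσp₁ (pow_le_one₀ hx0 hx1 (n := 4)),
      mul_nonneg (pow_nonneg hy0 4) (hσp₁.trans hσp)]
  linarith [mul_le_mul_of_nonneg_left h₂ (by positivity : (0:ℝ) ≤ 3 * g^2 * r^2),
    mul_le_mul_of_nonneg_left h₃ (by positivity : (0:ℝ) ≤ g^3 * r^3)]

lemma mul_Pcub_add_eq (p₁ p₂ σ ρ₁ x : ℝ) {γ₁ : ℝ} (hγ₁ : γ₁ ≠ 0) (n : ℕ) :
    NSstep γ₁ (n+1) * (1 - x) * Pcub p₁ p₂ σ γ₁ ρ₁ n x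
      + (1 - σ * p₂) * (3 * NSstep γ₁ (n+1) * NSstep ρ₁ (n+1)^2
        + NSstep γ₁ (n+1)^2 * NSstep ρ₁ (n+1)^3)
      = cubeDriftBound p₁ p₂ σ (NSstep γ₁ (n+1)) (NSstep ρ₁ (n+1)) x / NSstep γ₁ (n+1)
        - (1 - x)^3 / NSstep γ₁ n := by
  have hG : NSstep γ₁ (n+1) ≠ 0 :=
    div_ne_zero hγ₁ (Real.sqrt_pos.2 (by positivity)).ne'
  rw [Pcub, epsSeq, ← NSstep_succ_div ρ₁ γ₁ n, cubeDriftBound]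
  field_simp
  ring

namespace NS2

variable {Ω : Type} [MeasurableSpace Ω] (S : NS2 Ω)

instance : IsProbabilityMeasure S.μ := S.prob

lemma X_succ (n : ℕ) (ω : Ω) :
    S.X (n+1) ω = nsUpdate (NSstep S.γ₁ (n+1)) (NSstep S.ρ₁ (n+1)) (S.I (n+1) ω)
      (S.A (n+1) (S.I (n+1) ω) ω) (S.B (n+1) ω) (S.X n ω) :=
  S.hrec n ω

lemma X_mem_Icc (n : ℕ) (ω : Ω) : S.X n ω ∈ Set.Icc (0:ℝ) 1 := by
  induction n with
  | zero => exact S.hX0 ω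
  | succ n ih =>
    obtain ⟨a, ha⟩ := exists_bval_eq (S.hAval (n+1) (S.I (n+1) ω) ω)
    obtain ⟨b, hb⟩ := exists_bval_eq (S.hBval (n+1) ω)
    rw [X_succ, ha, hb]
    exact nsUpdate_mem_Icc (NSstep_succ_mem_Icc S.hγ₁ n) (NSstep_succ_mem_Icc S.hρ₁ n) ih _ a b

def outcome (n : ℕ) (u : Fin 2 × Bool × Bool) : Set Ω :=
  {ω | S.I (n+1) ω = u.1 ∧ S.A (n+1) u.1 ω = bval u.2.1 ∧ S.B (n+1) ω = bval u.2.2}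

lemma measurableSet_outcome (n : ℕ) (u : Fin 2 × Bool × Bool) :
    MeasurableSet (S.outcome n u) :=
  (((S.hImeas n).mono (S.F.le (n+1)) le_rfl) (measurableSet_singleton u.1)).inter
    (((S.hAmeas (n+1) u.1) (measurableSet_singleton _)).inter
      ((S.hBmeas (n+1)) (measurableSet_singleton _)))

lemma eq_sum_mul_indicator_outcome (n : ℕ) (ψ : Fin 2 → ℝ → ℝ → ℝ) (ω : Ω) :
    ψ (S.I (n+1) ω) (S.A (n+1) (S.I (n+1) ω) ω) (S.B (n+1) ω)
      = ∑ u, ψ u.1 (bval u.2.1) (bval u.2.2) * (S.outcome n u).indicator (fun _ => 1) ω := by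
  obtain ⟨a, ha⟩ := exists_bval_eq (S.hAval (n+1) (S.I (n+1) ω) ω)
  obtain ⟨b, hb⟩ := exists_bval_eq (S.hBval (n+1) ω)
  have hmem : ∀ u, ω ∈ S.outcome n u ↔ u = (S.I (n+1) ω, a, b) := by
    rintro ⟨j, a', b'⟩
    simp only [outcome, Set.mem_ofPred_eq, Prod.mk.injEq]
    constructor
    · rintro ⟨rfl, hA, hB⟩
      exact ⟨rfl, bval_injective (ha.symm.trans hA).symm, bval_injective (hb.symm.trans hB).symm⟩
    · rintro ⟨rfl, rfl, rfl⟩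
      exact ⟨rfl, ha, hb⟩
  classical
  simp only [Set.indicator_apply, hmem, mul_ite, mul_one, mul_zero, Finset.sum_ite_eq',
    Finset.mem_univ, if_true, ha, hb]

lemma integrable_mul_indicator_outcome (n : ℕ) (u : Fin 2 × Bool × Bool) {f : ℝ → ℝ}
    (hf : Continuous f) :
    Integrable (fun ω => f (S.X n ω) * (S.outcome n u).indicator (fun _ => 1) ω) S.μ := by
  obtain ⟨C, hC⟩ := isCompact_Icc.exists_bound_of_continuousOn (hf.continuousOn (s := Set.Icc 0 1))
  exact ((integrable_const 1).indicator (S.measurableSet_outcome n u)).bdd_mul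
    (hf.measurable.comp ((S.hXmeas n).mono (S.F.le n) le_rfl)).aestronglyMeasurable
    (Eventually.of_forall fun ω => hC _ (S.X_mem_Icc n ω))

lemma condExp_mul_indicator_outcome (n : ℕ) (u : Fin 2 × Bool × Bool) {f : ℝ → ℝ}
    (hf : Continuous f) :
    S.μ[fun ω => f (S.X n ω) * (S.outcome n u).indicator (fun _ => 1) ω | S.F n]
      =ᵐ[S.μ] fun ω => f (S.X n ω) * outcomeProb S.p₁ S.p₂ S.σ u (S.X n ω) := by
  have hfX : StronglyMeasurable[S.F n] fun ω => f (S.X n ω) :=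
    (hf.measurable.comp (S.hXmeas n)).stronglyMeasurable
  refine (condExp_mul_of_stronglyMeasurable_left hfX (S.integrable_mul_indicator_outcome n u hf)
    ((integrable_const 1).indicator (S.measurableSet_outcome n u))).trans ?_
  filter_upwards [S.condLaw n u.1 u.2.1 u.2.2] with ω hω
  simp only [Pi.mul_apply, outcome] at hω ⊢
  rw [hω, outcomeProb, mul_assoc]

lemma condExp_comp_step (n : ℕ) (φ : Fin 2 → ℝ → ℝ → ℝ → ℝ)
    (hφ : ∀ j a b, Continuous (φ j a b)) :
    S.μ[fun ω => φ (S.I (n+1) ω) (S.A (n+1) (S.I (n+1) ω) ω) (S.B (n+1) ω) (S.X n ω) | S.F n]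
      =ᵐ[S.μ] fun ω => ∑ u, φ u.1 (bval u.2.1) (bval u.2.2) (S.X n ω)
        * outcomeProb S.p₁ S.p₂ S.σ u (S.X n ω) := by
  have hsplit : (fun ω => φ (S.I (n+1) ω) (S.A (n+1) (S.I (n+1) ω) ω) (S.B (n+1) ω) (S.X n ω))
      = ∑ u, fun ω => φ u.1 (bval u.2.1) (bval u.2.2) (S.X n ω)
        * (S.outcome n u).indicator (fun _ => 1) ω := by
    funext ω
    rw [Finset.sum_apply]
    exact S.eq_sum_mul_indicator_outcome n (fun j a b => φ j a b (S.X n ω)) ω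
  rw [hsplit]
  refine (condExp_finsetSum (fun u _ => S.integrable_mul_indicator_outcome n u (hφ _ _ _)) _).trans ?_
  refine (eventuallyEq_sum fun u _ => S.condExp_mul_indicator_outcome n u (hφ _ _ _)).trans ?_
  filter_upwards with ω
  rw [Finset.sum_apply]

end NS2

theorem decomposition_Z3_general (Ω : Type) [MeasurableSpace Ω] (S : NS2 Ω) (n₀ : ℕ) :
    ∀ n, n₀ ≤ n →
      ∀ᵐ ω ∂S.μ,
        (S.μ[fun ω' => S.Z3 (n+1) ω' - S.Z3 n ω' | S.F n]) ω ≤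
          NSstep S.γ₁ (n+1) * (1 - S.X n ω) * Pcub S.p₁ S.p₂ S.σ S.γ₁ S.ρ₁ n (S.X n ω)
            + (1 - S.σ * S.p₂) *
              (3 * NSstep S.γ₁ (n+1) * (NSstep S.ρ₁ (n+1))^2
                + (NSstep S.γ₁ (n+1))^2 * (NSstep S.ρ₁ (n+1))^3) := by
  intro n _
  set G := NSstep S.γ₁ (n+1)
  set R := NSstep S.ρ₁ (n+1)
  let φ : Fin 2 → ℝ → ℝ → ℝ → ℝ := fun j a b x =>
    (1 - nsUpdate G R j a b x)^3 / G - (1 - x)^3 / NSstep S.γ₁ n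
  have hZ : (fun ω => S.Z3 (n+1) ω - S.Z3 n ω) = fun ω =>
      φ (S.I (n+1) ω) (S.A (n+1) (S.I (n+1) ω) ω) (S.B (n+1) ω) (S.X n ω) := by
    funext ω
    rw [NS2.Z3, NS2.Z3, S.X_succ]
  have hφ : ∀ j a b, Continuous (φ j a b) := fun j a b => by unfold φ nsUpdate; fun_prop
  rw [hZ]
  filter_upwards [S.condExp_comp_step n φ hφ] with ω hω
  rw [hω, mul_Pcub_add_eq _ _ _ _ _ S.hγ₁.1.ne' n]
  simp only [φ, sub_mul, Finset.sum_sub_distrib, div_mul_eq_mul_div, ← Finset.sum_div,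
    ← Finset.mul_sum, sum_outcomeProb, mul_one]
  gcongr
  · exact NSstep_nonneg S.hγ₁.1.le _
  · exact sum_cube_one_sub_nsUpdate_le S.hp₂ S.hp.le S.hp₁ S.hσ (NSstep_succ_mem_Icc S.hγ₁ n)
      (NSstep_nonneg S.hρ₁.1.le _) (S.X_mem_Icc n ω)

/-- **Lemma 4.4 (decomposition of `Zₙ⁽³⁾`)**: with `n₀ = ⌊1/(4ε²γ₁²π²)⌋ + 1`, for
every `n ≥ n₀`,
`E[Zₙ₊₁⁽³⁾ - Zₙ⁽³⁾ | Fₙ] ≤ γₙ₊₁ (1-Xₙ) Pₙ(Xₙ) + (1-σp₂)(3γₙ₊₁ρₙ₊₁² + γₙ₊₁²ρₙ₊₁³)`. -/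
theorem decomposition_Z3 (Ω : Type) [MeasurableSpace Ω] (S : NS2 Ω)
    (ε : ℝ) (hε : 0 < ε) (hε' : ε ≤ 1/3)
    (n₀ : ℕ) (hn₀ : n₀ = Nat.floor (1 / (4 * ε^2 * S.γ₁^2 * (S.p₁ - S.p₂)^2)) + 1) :
    ∀ n, n₀ ≤ n →
      ∀ᵐ ω ∂S.μ,
        (S.μ[fun ω' => S.Z3 (n+1) ω' - S.Z3 n ω' | S.F n]) ω ≤
          NSstep S.γ₁ (n+1) * (1 - S.X n ω) * Pcub S.p₁ S.p₂ S.σ S.γ₁ S.ρ₁ n (S.X n ω)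
            + (1 - S.σ * S.p₂) *
              (3 * NSstep S.γ₁ (n+1) * (NSstep S.ρ₁ (n+1))^2
                + (NSstep S.γ₁ (n+1))^2 * (NSstep S.ρ₁ (n+1))^3) :=
  decomposition_Z3_general Ω S n₀
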